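/- arXiv:2603.10718 — 2 statements merged into one kernel-verified Lean document; each statement's English description precedes it below -/
import Mathlib

section
/- Let g₁, g₂ ∈ ℝ^p be nonzero with ⟨g₁,g₂⟩ < 0, and define g̃₁ = g₁ − (⟨g₁,g₂⟩/‖g₂‖²)g₂ and g̃₂ = g₂ − (⟨g₁,g₂⟩/‖g₁‖²)g₁. Then the combined PCGrad direction g̃ = g̃₁ + g̃₂ satisfies ⟨g̃, g₁⟩ ≥ 0 and ⟨g̃, g₂⟩ ≥ 0; i.e., the PCGrad update does not increase either task loss to first order. -/
open RealInnerProductSpace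

/-- The combined PCGrad direction `g̃ = g̃₁ + g̃₂` for two conflicting gradients
has nonnegative inner product with each task gradient: the PCGrad update does
not increase either task loss to first order. -/
theorem pcgrad_combined_direction_nonconflicting (p : ℕ)
    (g₁ g₂ : EuclideanSpace ℝ (Fin p))
    (hg₁ : g₁ ≠ 0) (hg₂ : g₂ ≠ 0) (hconf : ⟪g₁, g₂⟫ < 0) :
    let g₁' := g₁ - (⟪g₁, g₂⟫ / ‖g₂‖ ^ 2) • g₂
    let g₂' := g₂ - (⟪g₁, g₂⟫ / ‖g₁‖ ^ 2) • g₁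
    0 ≤ ⟪g₁' + g₂', g₁⟫ ∧ 0 ≤ ⟪g₁' + g₂', g₂⟫ := by
  intro g₁' g₂'
  have h1 : (0:ℝ) < ‖g₁‖ := norm_pos_iff.mpr hg₁
  have h2 : (0:ℝ) < ‖g₂‖ := norm_pos_iff.mpr hg₂
  have hcs : |⟪g₁, g₂⟫| ≤ ‖g₁‖ * ‖g₂‖ := abs_real_inner_le_norm g₁ g₂
  have hsq : ⟪g₁, g₂⟫ ^ 2 ≤ ‖g₁‖ ^ 2 * ‖g₂‖ ^ 2 := by
    have := sq_abs ⟪g₁, g₂⟫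
    nlinarith [abs_nonneg ⟪g₁, g₂⟫, norm_nonneg g₁, norm_nonneg g₂]
  have e11 : ⟪g₁, g₁⟫ = ‖g₁‖ ^ 2 := real_inner_self_eq_norm_sq g₁
  have e22 : ⟪g₂, g₂⟫ = ‖g₂‖ ^ 2 := real_inner_self_eq_norm_sq g₂
  have e21 : ⟪g₂, g₁⟫ = ⟪g₁, g₂⟫ := real_inner_comm g₁ g₂
  constructor
  · have : ⟪g₁' + g₂', g₁⟫ = ‖g₁‖ ^ 2 - ⟪g₁, g₂⟫ ^ 2 / ‖g₂‖ ^ 2 := by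
      simp only [g₁', g₂', inner_add_left, inner_sub_left, real_inner_smul_left, e11, e22, e21]
      field_simp
      ring
    rw [this]
    rw [sub_nonneg, div_le_iff₀ (by positivity)]
    nlinarith
  · have : ⟪g₁' + g₂', g₂⟫ = ‖g₂‖ ^ 2 - ⟪g₁, g₂⟫ ^ 2 / ‖g₁‖ ^ 2 := by
      simp only [g₁', g₂', inner_add_left, inner_sub_left, real_inner_smul_left, e11, e22, e21]
      field_simp
      ring
    rw [this]
    rw [sub_nonneg, div_le_iff₀ (by positivity)]
    nlinarith
end

section
/- Let γ : [r,t] → M be a smooth curve on a Riemannian manifold with Levi–Civita connection, and let v(·,τ) be a smooth time-indexed vector field along γ with v(γ(τ),τ) ∈ T_{γ(τ)}M. Define the average velocity u(x_t,r,t) = (1/(t−r)) ∫_r^t P^γ_{τ→t}(v(x_τ,τ)) dτ ∈ T_{x_t}M, where P^γ_{τ→t} is parallel transport along γ. Then u satisfies the Riemannian MeanFlow identity: u(x_t,r,t) = v(x_t,t) − (t−r)·∇_{γ̇(t)}u(x_t,r,t), where ∇_{γ̇(t)} is the covariant derivative along γ at time t (with r fixed). -/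
open intervalIntegral

/-!
Transporting everything to the fibre over `γ(t)` turns `u` into the Euclidean average
`s ↦ (s - r)⁻¹ • ∫ τ in r..s, P τ t (v τ)`, since by the cocycle property
`P s t ∘ P τ s = P τ t` commutes with the integral. For an average `(s - r)⁻¹ • F s` the
quotient rule gives `(s - r) • (average)' = F' - average`, and `F' = P t t (v t) = v t`
by the fundamental theorem of calculus.
-/

theorem hasDerivAt_inv_sub_smul {𝕜 F : Type*} [NontriviallyNormedField 𝕜]
    [NormedAddCommGroup F] [NormedSpace 𝕜 F] {f : 𝕜 → F} {f' : F} {r t : 𝕜}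
    (hf : HasDerivAt f f' t) (hrt : t ≠ r) :
    HasDerivAt (fun s => (s - r)⁻¹ • f s) ((t - r)⁻¹ • (f' - (t - r)⁻¹ • f t)) t := by
  have hc : t - r ≠ 0 := sub_ne_zero.mpr hrt
  refine ((((hasDerivAt_id' t).sub_const r).inv hc).smul hf).congr_deriv ?_
  simp only [Pi.inv_apply, neg_div, one_div, ← inv_pow]
  module

theorem inv_sub_smul_eq_sub_smul_deriv {𝕜 F : Type*} [NontriviallyNormedField 𝕜]
    [NormedAddCommGroup F] [NormedSpace 𝕜 F] {f : 𝕜 → F} {f' : F} {r t : 𝕜}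
    (hf : HasDerivAt f f' t) (hrt : t ≠ r) :
    (t - r)⁻¹ • f t = f' - (t - r) • deriv (fun s => (s - r)⁻¹ • f s) t := by
  rw [(hasDerivAt_inv_sub_smul hf hrt).deriv, smul_smul, mul_inv_cancel₀ (sub_ne_zero.mpr hrt),
    one_smul, sub_sub_cancel]

theorem LinearIsometryEquiv.map_intervalIntegral_of_cocycle {E : Type*} [NormedAddCommGroup E]
    [NormedSpace ℝ E] [CompleteSpace E] {P : ℝ → ℝ → (E ≃ₗᵢ[ℝ] E)}
    (hP : ∀ a b c : ℝ, ∀ e : E, P b c (P a b e) = P a c e) (v : ℝ → E) (r s t : ℝ) :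
    P s t (∫ τ in r..s, P τ s (v τ)) = ∫ τ in r..s, P τ t (v τ) := by
  calc P s t (∫ τ in r..s, P τ s (v τ)) = ∫ τ in r..s, P s t (P τ s (v τ)) :=
        (LinearIsometry.intervalIntegral_comp_comm (P s t).toLinearIsometry _).symm
    _ = ∫ τ in r..s, P τ t (v τ) := integral_congr fun τ _ => hP τ s t (v τ)

/-- The tangent spaces along `γ` are identified with `E` by a parallel-transport
trivialization, so the covariant derivative `∇_{γ̇(t)} u` is the ordinary derivative at `t`
of the transported representative `s ↦ P s t (u s)`. -/
theorem riemannian_meanflow_identity_general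
    {E : Type*} [NormedAddCommGroup E] [InnerProductSpace ℝ E]
    [CompleteSpace E]
    (P : ℝ → ℝ → (E ≃ₗᵢ[ℝ] E))
    (hPrefl : ∀ a : ℝ, P a a = LinearIsometryEquiv.refl ℝ E)
    (hPcocycle : ∀ a b c : ℝ, ∀ e : E, P b c (P a b e) = P a c e)
    (v : ℝ → E)
    (hPv : ∀ t₀ : ℝ, Continuous fun τ => P τ t₀ (v τ))
    (r t : ℝ) (hrt : r < t)
    (u : ℝ → E)
    (hu : ∀ s : ℝ, u s = (s - r)⁻¹ • ∫ τ in r..s, P τ s (v τ)) :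
    u t = v t - (t - r) • deriv (fun s => P s t (u s)) t := by
  have htransported :
      (fun s => P s t (u s)) = fun s => (s - r)⁻¹ • ∫ τ in r..s, P τ t (v τ) := by
    funext s
    rw [hu s, LinearIsometryEquiv.map_smul,
      LinearIsometryEquiv.map_intervalIntegral_of_cocycle hPcocycle v r s t]
  have hFTC : HasDerivAt (fun s => ∫ τ in r..s, P τ t (v τ)) (v t) t := by
    simpa only [hPrefl t, LinearIsometryEquiv.coe_refl, id] using ((hPv t).integral_hasStrictDerivAt r t).hasDerivAt
  rw [htransported, ← inv_sub_smul_eq_sub_smul_deriv hFTC hrt.ne', hu t]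

/-- Riemannian MeanFlow identity, expressed in the trivialization of the
tangent bundle along the curve `γ` by parallel transport: all tangent spaces
`T_{γ(τ)}M` are identified with a fixed inner product space `E`, parallel
transport along `γ` from time `a` to time `b` is a linear isometry
`P a b : E ≃ₗᵢ E` with `P a a = id` and the cocycle property, `v τ`
represents the instantaneous velocity `v(x_τ, τ) ∈ T_{x_τ}M`, and the average
velocity is `u s = (s − r)⁻¹ • ∫ τ in r..s, P τ s (v τ)`. The covariant
derivative `∇_{γ̇(t)} u` of the vector field `u` along `γ` at time `t` is the
ordinary derivative of its parallel-transported representative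
`s ↦ P s t (u s)` at `s = t`. Then
`u t = v t − (t − r) • ∇_{γ̇(t)} u`. -/
theorem riemannian_meanflow_identity
    {M : Type*} {E : Type*} [NormedAddCommGroup E] [InnerProductSpace ℝ E]
    [CompleteSpace E]
    (γ : ℝ → M)
    (P : ℝ → ℝ → (E ≃ₗᵢ[ℝ] E))
    (hPrefl : ∀ a : ℝ, P a a = LinearIsometryEquiv.refl ℝ E)
    (hPcocycle : ∀ a b c : ℝ, ∀ e : E, P b c (P a b e) = P a c e)
    (v : ℝ → E) (hv : Continuous v)
    (hPv : ∀ t₀ : ℝ, Continuous fun τ => P τ t₀ (v τ))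
    (r t : ℝ) (hrt : r < t)
    (u : ℝ → E)
    (hu : ∀ s : ℝ, u s = (s - r)⁻¹ • ∫ τ in r..s, P τ s (v τ))
    (hdiff : DifferentiableAt ℝ (fun s => P s t (u s)) t) :
    u t = v t - (t - r) • deriv (fun s => P s t (u s)) t :=
  riemannian_meanflow_identity_general P hPrefl hPcocycle v hPv r t hrt u hu
end
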